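/- arXiv:1806.04589 — 2 statements merged into one kernel-verified Lean document; each statement's English description precedes it below -/
import Mathlib

section
/- let a, b be positive real numbers and let z, z₀ ≥ 0. Then log₂(1 + a/(b + z)) ≥ log₂(1 + a/(b + z₀)) − (a/((a + b + z₀)·(b + z₀)·ln 2))·(z − z₀), with equality when z = z₀. -/
/-!
Writing `t = b + z`, it suffices that `t ↦ log (1 + a / t)` lies above its tangent lines on
`t > 0`. The increment of the logarithm between `t₀` and `t` is `log r` for the ratio `r` of the
two arguments, and `log r ≥ 1 - r⁻¹`; the right-hand side differs from the tangent increment by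
`a (t - t₀)² / ((a + t) (a + t₀) t₀) ≥ 0`.
-/

open Real

lemma Real.log_one_add_div_sub_tangent_le {a t t₀ : ℝ} (ha : 0 ≤ a) (ht : 0 < t)
    (ht₀ : 0 < t₀) :
    log (1 + a / t₀) - a / ((a + t₀) * t₀) * (t - t₀) ≤ log (1 + a / t) := by
  have hpos : 0 < (1 + a / t) / (1 + a / t₀) := by positivity
  have hlog : log (1 + a / t) - log (1 + a / t₀) = log ((1 + a / t) / (1 + a / t₀)) :=
    (log_div (by positivity) (by positivity)).symm
  have hgap : 1 - ((1 + a / t) / (1 + a / t₀))⁻¹ =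
      -(a / ((a + t₀) * t₀) * (t - t₀)) + a * (t - t₀) ^ 2 / ((a + t) * (a + t₀) * t₀) := by
    field_simp
    ring
  have hsq : 0 ≤ a * (t - t₀) ^ 2 / ((a + t) * (a + t₀) * t₀) := by positivity
  linarith [one_sub_inv_le_log_of_pos hpos]

/-- Scalar form of Lemma 2: `log₂(1 + a/(b + z))` lies above its tangent line at
`z₀`, with equality when `z = z₀`. -/
theorem stmt_13 (a b : ℝ) (ha : 0 < a) (hb : 0 < b) (z z₀ : ℝ) (hz : 0 ≤ z)
    (hz₀ : 0 ≤ z₀) :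
    Real.logb 2 (1 + a / (b + z)) ≥
        Real.logb 2 (1 + a / (b + z₀)) -
          a / ((a + b + z₀) * (b + z₀) * Real.log 2) * (z - z₀) ∧
      (z = z₀ →
        Real.logb 2 (1 + a / (b + z)) =
          Real.logb 2 (1 + a / (b + z₀)) -
            a / ((a + b + z₀) * (b + z₀) * Real.log 2) * (z - z₀)) := by
  refine ⟨?_, fun h ↦ by simp [h]⟩
  have hslope : a / ((a + b + z₀) * (b + z₀) * log 2) * (z - z₀) =
      a / ((a + (b + z₀)) * (b + z₀)) * ((b + z) - (b + z₀)) / log 2 := by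
    rw [← add_assoc, div_mul_eq_div_div]
    ring
  rw [ge_iff_le, hslope, logb, logb, div_sub_div_same]
  exact div_le_div_of_nonneg_right
    (log_one_add_div_sub_tangent_le ha.le (by linarith) (by linarith)) (log_nonneg one_le_two)
end

section
/- Let β₀, P, σ², H > 0, let q_m be a point of the Euclidean plane (EuclideanSpace ℝ (Fin 2)), and let q, q̂ ∈ EuclideanSpace ℝ (Fin 2). Then log₂(1 + β₀·P/(σ²·(H² + ‖q − q_m‖²))) ≥ log₂(1 + β₀·P/(σ²·(H² + ‖q̂ − q_m‖²))) − (β₀·P/ln 2)/((σ²·H² + β₀·P + σ²·‖q̂ − q_m‖²)·(H² + ‖q̂ − q_m‖²)) · (‖q − q_m‖² − ‖q̂ − q_m‖²), with equality when q = q̂. -/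
/-! The map `x ↦ log (1 + a / x) = log (a + x) - log x` is convex on `(0, ∞)` for `a ≥ 0`, so it
lies above its tangent lines; applied to the squared horizontal distance, with
`a = β₀ P / σ²` and `x = H² + ‖q - q_m‖²`, this is the SCA surrogate. The tangent-line bound
itself comes from `log t ≤ t - 1` at `t = (1 + a / y) / (1 + a / x)`: the remainder is
`a (x - y)² / (y (a + x) (a + y)) ≥ 0`. -/

open Real

theorem log_one_add_div_ge_tangent {a x y : ℝ} (ha : 0 ≤ a) (hx : 0 < x) (hy : 0 < y) :
    log (1 + a / y) - a / ((a + y) * y) * (x - y) ≤ log (1 + a / x) := by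
  have hu : 0 < 1 + a / x := by positivity
  have hv : 0 < 1 + a / y := by positivity
  have log_ratio : 1 - (1 + a / y) / (1 + a / x) ≤ log (1 + a / x) - log (1 + a / y) := by
    have h := log_le_sub_one_of_pos (div_pos hv hu)
    rw [log_div hv.ne' hu.ne'] at h
    linarith
  have remainder : 1 - (1 + a / y) / (1 + a / x) - (-(a / ((a + y) * y)) * (x - y)) =
      a * (x - y) ^ 2 / (y * (a + x) * (a + y)) := by
    field_simp
    ring
  have remainder_nonneg : 0 ≤ a * (x - y) ^ 2 / (y * (a + x) * (a + y)) := by positivity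
  linarith

theorem logb_one_add_div_ge_tangent {b a x y : ℝ} (hb : 1 < b) (ha : 0 ≤ a) (hx : 0 < x)
    (hy : 0 < y) :
    logb b (1 + a / y) - a / log b / ((a + y) * y) * (x - y) ≤ logb b (1 + a / x) := by
  have hlog : 0 < log b := log_pos hb
  calc logb b (1 + a / y) - a / log b / ((a + y) * y) * (x - y)
      = (log (1 + a / y) - a / ((a + y) * y) * (x - y)) / log b := by
        rw [logb]; ring
    _ ≤ log (1 + a / x) / log b := by
        gcongr
        exact log_one_add_div_ge_tangent ha hx hy
    _ = logb b (1 + a / x) := rfl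

/-- Lemma 2: the achievable spectral efficiency is lower bounded by its first-order
surrogate in the squared UAV-user distance taken at the local trajectory point `q̂`,
with equality when `q = q̂`. -/
theorem stmt_14 (β₀ P σ2 H : ℝ) (hβ : 0 < β₀) (hP : 0 < P) (hσ : 0 < σ2)
    (hH : 0 < H) (qm q qhat : EuclideanSpace ℝ (Fin 2)) :
    Real.logb 2 (1 + β₀ * P / (σ2 * (H ^ 2 + ‖q - qm‖ ^ 2))) ≥
        Real.logb 2 (1 + β₀ * P / (σ2 * (H ^ 2 + ‖qhat - qm‖ ^ 2))) -
          β₀ * P / Real.log 2 /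
              ((σ2 * H ^ 2 + β₀ * P + σ2 * ‖qhat - qm‖ ^ 2) *
                (H ^ 2 + ‖qhat - qm‖ ^ 2)) *
            (‖q - qm‖ ^ 2 - ‖qhat - qm‖ ^ 2) ∧
      (q = qhat →
        Real.logb 2 (1 + β₀ * P / (σ2 * (H ^ 2 + ‖q - qm‖ ^ 2))) =
          Real.logb 2 (1 + β₀ * P / (σ2 * (H ^ 2 + ‖qhat - qm‖ ^ 2))) -
            β₀ * P / Real.log 2 /
                ((σ2 * H ^ 2 + β₀ * P + σ2 * ‖qhat - qm‖ ^ 2) *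
                  (H ^ 2 + ‖qhat - qm‖ ^ 2)) *
              (‖q - qm‖ ^ 2 - ‖qhat - qm‖ ^ 2)) := by
  refine ⟨?_, fun hq => by subst hq; simp⟩
  have hx : 0 < H ^ 2 + ‖q - qm‖ ^ 2 := by positivity
  have hy : 0 < H ^ 2 + ‖qhat - qm‖ ^ 2 := by positivity
  have tangent := logb_one_add_div_ge_tangent one_lt_two
    (div_nonneg (mul_pos hβ hP).le hσ.le) hx hy
  have snr_div (d : ℝ) : β₀ * P / (σ2 * (H ^ 2 + d)) = β₀ * P / σ2 / (H ^ 2 + d) := by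
    rw [div_mul_eq_div_div_swap, div_right_comm]
  have coeff : β₀ * P / log 2 / ((σ2 * H ^ 2 + β₀ * P + σ2 * ‖qhat - qm‖ ^ 2) *
      (H ^ 2 + ‖qhat - qm‖ ^ 2)) = β₀ * P / σ2 / log 2 /
        ((β₀ * P / σ2 + (H ^ 2 + ‖qhat - qm‖ ^ 2)) * (H ^ 2 + ‖qhat - qm‖ ^ 2)) := by
    field_simp
    ring
  rw [snr_div, snr_div, coeff, ge_iff_le]
  rwa [add_sub_add_left_eq_sub] at tangent
end
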